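/- Let B = {λ_{l+1}, …, λ_{n−1}} be nonnegative reals with σ₁(B) > 0. For each j, set c_j = (σ₁(B|j)² − σ₂(B|j))/σ₁(B)². Then Σ_{j∈B} c_j λ_j ≤ σ₁(B), and each c_j satisfies 0 ≤ c_j ≤ 1. -/

import Mathlib

/-!
Expanding the square gives `σ₁(B|j)² - σ₂(B|j) = ∑_{i ≠ j} λᵢ² + σ₂(B|j)`, which is nonnegative,
and it is at most `σ₁(B|j)² ≤ σ₁(B)²` because `σ₂(B|j) ≥ 0`. Hence `0 ≤ c_j ≤ 1`, and then
`∑ c_j λ_j ≤ ∑ λ_j = σ₁(B)`.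
-/

open scoped BigOperators

/-- `k`-th elementary symmetric function of the values of `f` on `s`. -/
noncomputable def esymm {ι : Type*} [DecidableEq ι] (s : Finset ι) (k : ℕ) (f : ι → ℝ) : ℝ :=
  ∑ t ∈ s.powersetCard k, ∏ i ∈ t, f i

open Finset

section Esymm

variable {ι : Type*} [DecidableEq ι]

lemma esymm_one (s : Finset ι) (f : ι → ℝ) : esymm s 1 f = ∑ i ∈ s, f i := by
  simp [esymm, powersetCard_one]

lemma esymm_nonneg (s : Finset ι) (k : ℕ) {f : ι → ℝ} (hf : ∀ i, 0 ≤ f i) :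
    0 ≤ esymm s k f :=
  sum_nonneg fun _ _ => prod_nonneg fun i _ => hf i

lemma esymm_succ_insert {a : ι} {s : Finset ι} (ha : a ∉ s) (k : ℕ) (f : ι → ℝ) :
    esymm (insert a s) (k + 1) f = esymm s (k + 1) f + f a * esymm s k f := by
  have ha_notMem : ∀ t ∈ s.powersetCard k, a ∉ t := fun t ht hat =>
    ha ((mem_powersetCard.1 ht).1 hat)
  have hdisj : Disjoint (s.powersetCard (k + 1)) ((s.powersetCard k).image (insert a)) := by
    refine disjoint_right.2 fun t ht hts => ?_
    obtain ⟨u, -, rfl⟩ := mem_image.1 ht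
    exact ha ((mem_powersetCard.1 hts).1 (mem_insert_self a u))
  have hinj : Set.InjOn (insert a) (s.powersetCard k : Set (Finset ι)) :=
    fun t ht u hu htu => by
      simpa [erase_insert (ha_notMem t ht), erase_insert (ha_notMem u hu)] using
        congrArg (erase · a) htu
  rw [esymm, powersetCard_succ_insert ha, sum_union hdisj, sum_image hinj, esymm, esymm,
    mul_sum]
  congr 1
  exact sum_congr rfl fun t ht => prod_insert (ha_notMem t ht)

lemma sq_sum_eq_sum_sq_add_two_mul_esymm_two (s : Finset ι) (f : ι → ℝ) :
    (∑ i ∈ s, f i) ^ 2 = ∑ i ∈ s, f i ^ 2 + 2 * esymm s 2 f := by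
  induction s using Finset.induction_on with
  | empty => simp [esymm, powersetCard_eq_empty.2 (by simp : (∅ : Finset ι).card < 2)]
  | insert a s ha ih =>
    rw [sum_insert ha, sum_insert ha, esymm_succ_insert ha, esymm_one, add_sq, ih]
    ring

lemma esymm_two_le_sq_esymm_one (s : Finset ι) {f : ι → ℝ} (hf : ∀ i, 0 ≤ f i) :
    esymm s 2 f ≤ esymm s 1 f ^ 2 := by
  have hsq : 0 ≤ ∑ i ∈ s, f i ^ 2 := sum_nonneg fun i _ => sq_nonneg (f i)
  rw [esymm_one, sq_sum_eq_sum_sq_add_two_mul_esymm_two]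
  linarith [esymm_nonneg s 2 hf]

lemma sq_esymm_one_sub_esymm_two_le {s t : Finset ι} (hts : t ⊆ s) {f : ι → ℝ}
    (hf : ∀ i, 0 ≤ f i) : esymm t 1 f ^ 2 - esymm t 2 f ≤ esymm s 1 f ^ 2 := by
  have hsub : esymm t 1 f ≤ esymm s 1 f := by
    simp only [esymm_one]
    exact sum_le_sum_of_subset_of_nonneg hts fun i _ _ => hf i
  have hsq : esymm t 1 f ^ 2 ≤ esymm s 1 f ^ 2 :=
    pow_le_pow_left₀ (esymm_nonneg t 1 hf) hsub 2
  linarith [esymm_nonneg t 2 hf]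

end Esymm

theorem stmt15 {m : ℕ} (lam : Fin m → ℝ) (hlam : ∀ i, 0 ≤ lam i)
    (hσ : 0 < esymm Finset.univ 1 lam)
    (cc : Fin m → ℝ)
    (hcc : ∀ j, cc j =
      ((esymm (Finset.univ.erase j) 1 lam) ^ 2 - esymm (Finset.univ.erase j) 2 lam)
        / (esymm Finset.univ 1 lam) ^ 2) :
    (∑ j, cc j * lam j ≤ esymm Finset.univ 1 lam) ∧
    ∀ j, 0 ≤ cc j ∧ cc j ≤ 1 := by
  have hσsq : 0 < esymm univ 1 lam ^ 2 := pow_pos hσ 2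
  have hcc_mem : ∀ j, 0 ≤ cc j ∧ cc j ≤ 1 := fun j => by
    rw [hcc j, div_le_one hσsq]
    exact ⟨div_nonneg (sub_nonneg.2 (esymm_two_le_sq_esymm_one _ hlam)) hσsq.le,
      sq_esymm_one_sub_esymm_two_le (erase_subset j univ) hlam⟩
  refine ⟨?_, hcc_mem⟩
  calc ∑ j, cc j * lam j ≤ ∑ j, lam j :=
        sum_le_sum fun j _ => mul_le_of_le_one_left (hlam j) (hcc_mem j).2
    _ = esymm univ 1 lam := (esymm_one univ lam).symm
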